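/- arXiv:2208.05834 — 2 statements merged into one kernel-verified Lean document; each statement's English description precedes it below -/
import Mathlib

section
/- For τ = ε, the SDIE equation reduces to −S_τ u_n + (1/2)𝟙 = β_{n+1} with the subdifferential sign constraints, whose solution set is exactly: (u_{n+1})_i = 1 if (S_τ u_n)_i > 1/2, (u_{n+1})_i = 0 if (S_τ u_n)_i < 1/2, and (u_{n+1})_i ∈ [0,1] arbitrary if (S_τ u_n)_i = 1/2 (the graph MBO thresholding). -/
/-- For `τ = ε`, the SDIE equation reduces to `-S_τu_n + (1/2)𝟙 = β` with the
subdifferential sign constraints, and its solution set is exactly the graph MBO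
thresholding. -/
theorem sdie_mbo_solutions
    {V : Type*} [Fintype V] (ε τ : ℝ) (hε : 0 < ε) (hτ : τ = ε)
    (s : V → ℝ) (u : V → ℝ) :
    ((∀ i, u i ∈ Set.Icc (0:ℝ) 1) ∧
      ∃ β : V → ℝ,
        (∀ i, -(s i) + 1/2 = β i) ∧
        (∀ i, u i = 0 → 0 ≤ β i) ∧
        (∀ i, u i = 1 → β i ≤ 0) ∧
        (∀ i, u i ∈ Set.Ioo (0:ℝ) 1 → β i = 0))
    ↔ (∀ i,
        (1/2 < s i → u i = 1) ∧
        (s i < 1/2 → u i = 0) ∧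
        (s i = 1/2 → u i ∈ Set.Icc (0:ℝ) 1)) := by
  constructor
  · rintro ⟨hIcc, β, hβ, h0, h1, hmid⟩ i
    have hβi := (hβ i).symm
    have hi := hIcc i
    refine ⟨?_, ?_, fun _ => hi⟩
    · intro hs
      by_contra hne
      have hβneg : β i < 0 := by rw [hβi]; linarith
      have hu0 : u i ≠ 0 := fun h => absurd (h0 i h) (by linarith)
      have : u i ∈ Set.Ioo (0:ℝ) 1 :=
        ⟨lt_of_le_of_ne hi.1 (Ne.symm hu0), lt_of_le_of_ne hi.2 hne⟩
      exact absurd (hmid i this) (by linarith)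
    · intro hs
      by_contra hne
      have hβpos : 0 < β i := by rw [hβi]; linarith
      have hu1 : u i ≠ 1 := fun h => absurd (h1 i h) (by linarith)
      have : u i ∈ Set.Ioo (0:ℝ) 1 :=
        ⟨lt_of_le_of_ne hi.1 (Ne.symm hne), lt_of_le_of_ne hi.2 hu1⟩
      exact absurd (hmid i this) (by linarith)
  · intro h
    have hIcc : ∀ i, u i ∈ Set.Icc (0:ℝ) 1 := by
      intro i
      rcases lt_trichotomy (s i) (1/2) with hs | hs | hs
      · rw [(h i).2.1 hs]; exact ⟨le_refl 0, by norm_num⟩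
      · exact (h i).2.2 hs
      · rw [(h i).1 hs]; exact ⟨by norm_num, le_refl 1⟩
    refine ⟨hIcc, fun i => -(s i) + 1/2, fun i => rfl, ?_, ?_, ?_⟩
    · intro i hu
      by_contra hneg
      have hs : 1/2 < s i := by linarith [not_le.mp hneg]
      rw [(h i).1 hs] at hu; norm_num at hu
    · intro i hu
      by_contra hpos
      have hs : s i < 1/2 := by linarith [not_le.mp hpos]
      rw [(h i).2.1 hs] at hu; norm_num at hu
    · intro i hu
      rcases lt_trichotomy (s i) (1/2) with hs | hs | hs
      · rw [(h i).2.1 hs] at hu; exact absurd hu.1 (lt_irrefl 0)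
      · simp [hs]
      · rw [(h i).1 hs] at hu; exact absurd hu.2 (lt_irrefl 1)
end

section
/- Under the alternating proximal scheme x_{n+1} = argmin_x 𝓕(x) + 𝓖(u_n,x) + η_n‖x−x_n‖², u_{n+1} = argmin_u 𝓖(u,x_{n+1}) + ℋ^f(u) + ν_n‖u−u_n‖², with η_n, ν_n ∈ (a,b), 0 < a < b, the objective 𝒥^f(u,x) = 𝓕(x) + 𝓖(u,x) + ℋ^f(u) is non-increasing along iterates: 𝒥^f(u_{n+1}, x_{n+1}) ≤ 𝒥^f(u_n, x_n), with equality if and only if x_{n+1} = x_n and u_{n+1} = u_n; moreover Σ_n (‖x_{n+1}−x_n‖² + ‖u_{n+1}−u_n‖²) < ∞ when 𝒥^f is bounded below. -/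
/-!
Testing the `x`-step against `xₙ` and the `u`-step against `uₙ` and adding, the coupling value
`𝓖(uₙ, xₙ₊₁)` cancels and `𝒥(uₙ₊₁, xₙ₊₁) + ηₙ‖xₙ₊₁ - xₙ‖² + νₙ‖uₙ₊₁ - uₙ‖² ≤ 𝒥(uₙ, xₙ)`.
Testing the steps against points where `𝓕` and `ℋ` are finite shows that `𝒥` is finite along the
iterates, so this decrease can be cancelled (equality forces both steps to vanish, the weights
being at least `a > 0`) and telescoped (summability when `𝒥` is bounded below).
-/

open Finset

theorem summable_of_add_le_of_forall_le {j c : ℕ → ℝ} {L : ℝ} (hc : ∀ n, 0 ≤ c n)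
    (hj : ∀ n, j (n + 1) + c n ≤ j n) (hL : ∀ n, L ≤ j n) : Summable c := by
  refine summable_of_sum_range_le hc (c := j 0 - L) fun N => ?_
  calc ∑ k ∈ range N, c k ≤ ∑ k ∈ range N, (j k - j (k + 1)) :=
        sum_le_sum fun k _ => by linarith [hj k]
    _ = j 0 - j N := sum_range_sub' j N
    _ ≤ j 0 - L := by linarith [hL N]

namespace EReal

lemma le_zero_of_add_coe_le_self {a : EReal} {c : ℝ} (h : a + c ≤ a) (ha : a ≠ ⊥)
    (ha' : a ≠ ⊤) : c ≤ 0 := by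
  lift a to ℝ using ⟨ha', ha⟩
  have : a + c ≤ a := by exact_mod_cast h
  linarith

theorem summable_of_add_coe_le {j : ℕ → EReal} {c : ℕ → ℝ} {L : ℝ} (hc : ∀ n, 0 ≤ c n)
    (hj : ∀ n, j (n + 1) + c n ≤ j n) (htop : ∀ n, j (n + 1) ≠ ⊤)
    (hL : ∀ n, (L : EReal) ≤ j n) : Summable c := by
  have hj_coe : ∀ n, ((j (n + 1)).toReal : EReal) = j (n + 1) := fun n =>
    coe_toReal (htop n) (ne_bot_of_le_ne_bot (coe_ne_bot L) (hL _))
  refine (summable_nat_add_iff 1).mp <| summable_of_add_le_of_forall_le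
    (j := fun n => (j (n + 1)).toReal) (L := L) (fun n => hc (n + 1)) (fun n => ?_) (fun n => ?_)
  · have := hj (n + 1)
    rw [← hj_coe (n + 1), ← hj_coe n] at this
    exact_mod_cast this
  · have := hL (n + 1)
    rw [← hj_coe] at this
    exact_mod_cast this

end EReal

theorem add_coe_add_le_of_alternating_steps {X U : Type*} {F : X → EReal} {G : U × X → ℝ}
    {H : U → EReal} {x x' : X} {u u' : U} {p q : ℝ}
    (hx : F x' + G (u, x') + p ≤ F x + G (u, x))
    (hu : G (u', x') + H u' + q ≤ G (u, x') + H u) :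
    F x' + G (u', x') + H u' + ((p + q : ℝ) : EReal) ≤ F x + G (u, x) + H u :=
  calc F x' + G (u', x') + H u' + ((p + q : ℝ) : EReal)
      = (F x' + p) + (G (u', x') + H u' + q) := by push_cast; abel
    _ ≤ (F x' + p) + (G (u, x') + H u) := add_le_add le_rfl hu
    _ = (F x' + G (u, x') + p) + H u := by abel
    _ ≤ F x + G (u, x) + H u := add_le_add hx le_rfl

theorem objective_ne_top_of_alternating_steps {X U : Type*} {F : X → EReal} {G : U × X → ℝ}
    {H : U → EReal} {x' x₀ : X} {u u' u₀ : U} {p p₀ q q₀ : ℝ}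
    (hx : F x' + G (u, x') + p ≤ F x₀ + G (u, x₀) + p₀)
    (hu : G (u', x') + H u' + q ≤ G (u₀, x') + H u₀ + q₀) (hx₀ : F x₀ ≠ ⊤) (hu₀ : H u₀ ≠ ⊤) :
    F x' + G (u', x') + H u' ≠ ⊤ := by
  have hF : F x' ≠ ⊤ :=
    (EReal.add_ne_top_iff_ne_top_left (EReal.coe_ne_bot _) (EReal.coe_ne_top _)).1 <|
      (EReal.add_ne_top_iff_ne_top_left (EReal.coe_ne_bot _) (EReal.coe_ne_top _)).1 <|
        ne_top_of_le_ne_top (EReal.add_ne_top (EReal.add_ne_top hx₀ (EReal.coe_ne_top _))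
          (EReal.coe_ne_top _)) hx
  have hH : H u' ≠ ⊤ :=
    (EReal.add_ne_top_iff_ne_top_right (EReal.coe_ne_bot _) (EReal.coe_ne_top _)).1 <|
      (EReal.add_ne_top_iff_ne_top_left (EReal.coe_ne_bot _) (EReal.coe_ne_top _)).1 <|
        ne_top_of_le_ne_top (EReal.add_ne_top (EReal.add_ne_top (EReal.coe_ne_top _) hu₀)
          (EReal.coe_ne_top _)) hu
  exact EReal.add_ne_top (EReal.add_ne_top hF (EReal.coe_ne_top _)) hH

theorem alternating_prox_descent_general
    {X U : Type*}
    [NormedAddCommGroup X]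
    [NormedAddCommGroup U]
    (F : X → EReal) (G : U × X → ℝ) (H : U → EReal)
    (hFbot : ∀ x, F x ≠ ⊥) (hFproper : ∃ x, F x ≠ ⊤)
    (hHbot : ∀ u, H u ≠ ⊥) (hHproper : ∃ u, H u ≠ ⊤)
    (a b : ℝ) (ha : 0 < a)
    (η ν : ℕ → ℝ) (hη : ∀ n, η n ∈ Set.Ioo a b) (hν : ∀ n, ν n ∈ Set.Ioo a b)
    (x : ℕ → X) (u : ℕ → U)
    (J : U × X → EReal) (hJ : ∀ p, J p = F p.2 + (G p : EReal) + H p.1)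
    (hx : ∀ n, ∀ x' : X,
      F (x (n+1)) + (G (u n, x (n+1)) : EReal)
          + ((η n * ‖x (n+1) - x n‖^2 : ℝ) : EReal)
        ≤ F x' + (G (u n, x') : EReal) + ((η n * ‖x' - x n‖^2 : ℝ) : EReal))
    (hu : ∀ n, ∀ u' : U,
      (G (u (n+1), x (n+1)) : EReal) + H (u (n+1))
          + ((ν n * ‖u (n+1) - u n‖^2 : ℝ) : EReal)
        ≤ (G (u', x (n+1)) : EReal) + H u' + ((ν n * ‖u' - u n‖^2 : ℝ) : EReal)) :
    (∀ n, J (u (n+1), x (n+1)) ≤ J (u n, x n) ∧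
      (J (u (n+1), x (n+1)) = J (u n, x n) ↔ x (n+1) = x n ∧ u (n+1) = u n)) ∧
    ((∃ L : ℝ, ∀ p : U × X, (L : EReal) ≤ J p) →
      Summable (fun n => ‖x (n+1) - x n‖^2 + ‖u (n+1) - u n‖^2)) := by
  obtain ⟨x₀, hx₀⟩ := hFproper
  obtain ⟨u₀, hu₀⟩ := hHproper
  set d : ℕ → ℝ := fun n => ‖x (n+1) - x n‖^2 + ‖u (n+1) - u n‖^2
  set c : ℕ → ℝ := fun n => η n * ‖x (n+1) - x n‖^2 + ν n * ‖u (n+1) - u n‖^2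
  have hd : ∀ n, 0 ≤ d n := fun n => by positivity
  have hdc : ∀ n, a * d n ≤ c n := fun n => by
    have := (hη n).1; have := (hν n).1
    simp only [d, c]
    nlinarith [sq_nonneg ‖x (n+1) - x n‖, sq_nonneg ‖u (n+1) - u n‖]
  have hc : ∀ n, 0 ≤ c n := fun n => (mul_nonneg ha.le (hd n)).trans (hdc n)
  have hdesc : ∀ n, J (u (n+1), x (n+1)) + c n ≤ J (u n, x n) := fun n => by
    have hxn := hx n (x n)
    have hun := hu n (u n)
    simp only [sub_self, norm_zero, ne_eq, OfNat.ofNat_ne_zero, not_false_eq_true, zero_pow,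
      mul_zero, EReal.coe_zero, add_zero] at hxn hun
    rw [hJ, hJ]
    exact add_coe_add_le_of_alternating_steps hxn hun
  have htop : ∀ n, J (u (n+1), x (n+1)) ≠ ⊤ := fun n => by
    rw [hJ]; exact objective_ne_top_of_alternating_steps (hx n x₀) (hu n u₀) hx₀ hu₀
  have hbot : ∀ n, J (u (n+1), x (n+1)) ≠ ⊥ := fun n => by
    simp [hJ, EReal.add_eq_bot_iff, hFbot, hHbot]
  refine ⟨fun n => ⟨?_, fun heq => ?_, fun ⟨hxn, hun⟩ => by rw [hxn, hun]⟩,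
    fun ⟨L, hL⟩ => ?_⟩
  · exact (le_add_of_nonneg_right (EReal.coe_nonneg.2 (hc n))).trans (hdesc n)
  · have hc0 := EReal.le_zero_of_add_coe_le_self (heq.symm ▸ hdesc n) (hbot n) (htop n)
    have hd0 : d n = 0 := le_antisymm
      (nonpos_of_mul_nonpos_right ((hdc n).trans hc0) ha) (hd n)
    simpa [d, sub_eq_zero] using
      (add_eq_zero_iff_of_nonneg (by positivity) (by positivity)).1 hd0
  · have hcs : Summable c :=
      EReal.summable_of_add_coe_le (j := fun n => J (u n, x n)) hc hdesc htop fun n => hL _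
    refine Summable.of_nonneg_of_le hd (fun n => ?_) (hcs.mul_left a⁻¹)
    rw [le_inv_mul_iff₀ ha]
    exact hdc n

/-- Descent property of the alternating proximal scheme: the objective
`𝒥^f(u,x) = 𝓕(x) + 𝓖(u,x) + ℋ^f(u)` is non-increasing along the iterates, with
equality iff the iterates are stationary, and the squared successive differences
are summable when `𝒥^f` is bounded below. -/
theorem alternating_prox_descent
    {X U : Type*}
    [NormedAddCommGroup X] [InnerProductSpace ℝ X] [FiniteDimensional ℝ X]
    [NormedAddCommGroup U] [InnerProductSpace ℝ U] [FiniteDimensional ℝ U]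
    (F : X → EReal) (G : U × X → ℝ) (H : U → EReal)
    (hFbot : ∀ x, F x ≠ ⊥) (hFproper : ∃ x, F x ≠ ⊤)
    (hFlsc : LowerSemicontinuous F)
    (hFbdd : ∃ c : ℝ, ∀ x, (c : EReal) ≤ F x)
    (hFcoer : ∀ M : ℝ, ∃ R : ℝ, ∀ x : X, R ≤ ‖x‖ → (M : EReal) ≤ F x)
    (hG : ContDiff ℝ 1 G)
    (hHbot : ∀ u, H u ≠ ⊥) (hHproper : ∃ u, H u ≠ ⊤)
    (hHlsc : LowerSemicontinuous H)
    (hHbdd : ∃ c : ℝ, ∀ u, (c : EReal) ≤ H u)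
    (a b : ℝ) (ha : 0 < a) (hab : a < b)
    (η ν : ℕ → ℝ) (hη : ∀ n, η n ∈ Set.Ioo a b) (hν : ∀ n, ν n ∈ Set.Ioo a b)
    (x : ℕ → X) (u : ℕ → U)
    (J : U × X → EReal) (hJ : ∀ p, J p = F p.2 + (G p : EReal) + H p.1)
    (hx : ∀ n, ∀ x' : X,
      F (x (n+1)) + (G (u n, x (n+1)) : EReal)
          + ((η n * ‖x (n+1) - x n‖^2 : ℝ) : EReal)
        ≤ F x' + (G (u n, x') : EReal) + ((η n * ‖x' - x n‖^2 : ℝ) : EReal))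
    (hu : ∀ n, ∀ u' : U,
      (G (u (n+1), x (n+1)) : EReal) + H (u (n+1))
          + ((ν n * ‖u (n+1) - u n‖^2 : ℝ) : EReal)
        ≤ (G (u', x (n+1)) : EReal) + H u' + ((ν n * ‖u' - u n‖^2 : ℝ) : EReal)) :
    (∀ n, J (u (n+1), x (n+1)) ≤ J (u n, x n) ∧
      (J (u (n+1), x (n+1)) = J (u n, x n) ↔ x (n+1) = x n ∧ u (n+1) = u n)) ∧
    ((∃ L : ℝ, ∀ p : U × X, (L : EReal) ≤ J p) →
      Summable (fun n => ‖x (n+1) - x n‖^2 + ‖u (n+1) - u n‖^2)) :=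
  alternating_prox_descent_general F G H hFbot hFproper hHbot hHproper a b ha η ν hη hν x u J hJ hx
    hu
end
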